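/- Let (X,d) be a geodesic space and h : X → ℝ a convex function (convex along all constant-speed geodesics). Then for all x, y ∈ X, h(x) - h(y) ≤ d(x,y)·|∇⁻h|(x), where |∇⁻h|(x) = limsup_{z→x}[h(z)-h(x)]₋/d(z,x). Consequently, for every t > 0, 0 ≤ (h(x) - Q_t h(x))/t ≤ (1/4)|∇⁻h(x)|², where Q_t h(x) = inf_y{h(y) + d(x,y)²/t}. -/

import Mathlib

/-!
Along a geodesic `γ` from `x` to `y`, convexity gives
`h x - h (γ s) ≥ s (h x - h y)` while `d(γ s, x) = s d(x, y)`, so every point `γ s` has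
descent quotient at least `(h x - h y) / d(x, y)`; letting `s → 0⁺` bounds the descending
slope from below. The estimate on `Q_t h` then follows from
`d S ≤ d² / t + t S² / 4`.
-/

open Filter Set

/-- A constant-speed geodesic parametrized by `[0,1]`:
`d(γ s, γ t) = |s - t| d(γ 0, γ 1)` for all `s, t ∈ [0,1]`. -/
def IsUnitGeodesic {X : Type*} [MetricSpace X] (γ : ℝ → X) : Prop :=
  ∀ s ∈ Icc (0:ℝ) 1, ∀ t ∈ Icc (0:ℝ) 1, dist (γ s) (γ t) = |s - t| * dist (γ 0) (γ 1)

/-- The descending slope `|∇⁻h|(x) = limsup_{z → x} [h(z)-h(x)]₋ / d(z,x)`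
(equal to `0` at isolated points by the real limsup convention). -/
noncomputable def descSlope {X : Type*} [MetricSpace X] (h : X → ℝ) (x : X) : ℝ :=
  limsup (fun z => max (h x - h z) 0 / dist z x) (nhdsWithin x {x}ᶜ)

open Topology

lemma LipschitzOnWith.isBoundedUnder_descentQuotient {X : Type*} [PseudoMetricSpace X]
    {h : X → ℝ} {K : NNReal} {s : Set X} {x : X} (hK : LipschitzOnWith K h s) (hs : s ∈ 𝓝 x) :
    IsBoundedUnder (· ≤ ·) (𝓝[≠] x) (fun z => max (h x - h z) 0 / dist z x) := by
  refine ⟨K, eventually_map.mpr ?_⟩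
  filter_upwards [nhdsWithin_le_nhds hs] with z hz
  have hlip : |h x - h z| ≤ K * dist z x := by
    simpa [Real.dist_eq, dist_comm z x] using hK.dist_le_mul x (mem_of_mem_nhds hs) z hz
  exact div_le_of_le_mul₀ dist_nonneg K.coe_nonneg
    ((max_le (le_abs_self _) (abs_nonneg _)).trans hlip)

namespace IsUnitGeodesic

variable {X : Type*} [MetricSpace X] {γ : ℝ → X}

lemma dist_apply_zero (hγ : IsUnitGeodesic γ) {s : ℝ} (hs : s ∈ Icc (0 : ℝ) 1) :
    dist (γ s) (γ 0) = s * dist (γ 0) (γ 1) := by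
  simpa [abs_of_nonneg hs.1] using hγ s hs 0 (left_mem_Icc.mpr zero_le_one)

lemma tendsto_nhdsNE (hγ : IsUnitGeodesic γ) (hne : γ 0 ≠ γ 1) :
    Tendsto γ (𝓝[>] 0) (𝓝[≠] γ 0) := by
  have hd : 0 < dist (γ 0) (γ 1) := dist_pos.mpr hne
  have hIoc : ∀ᶠ s in 𝓝[>] (0 : ℝ), s ∈ Ioc (0 : ℝ) 1 := Ioc_mem_nhdsGT one_pos
  refine tendsto_nhdsWithin_of_tendsto_nhds_of_eventually_within _ ?_ ?_
  · rw [tendsto_iff_dist_tendsto_zero]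
    have hlin : Tendsto (fun s : ℝ => s * dist (γ 0) (γ 1)) (𝓝[>] 0) (𝓝 0) := by
      simpa using ((tendsto_id (x := 𝓝 (0 : ℝ))).mul_const _).mono_left nhdsWithin_le_nhds
    refine hlin.congr' ?_
    filter_upwards [hIoc] with s hs
    exact (hγ.dist_apply_zero (Ioc_subset_Icc_self hs)).symm
  · filter_upwards [hIoc] with s hs hs0
    have := hγ.dist_apply_zero (Ioc_subset_Icc_self hs)
    rw [mem_singleton_iff.mp hs0, dist_self] at this
    exact (mul_pos hs.1 hd).ne' this.symm

lemma chord_slope_le_descentQuotient (hγ : IsUnitGeodesic γ) {h : X → ℝ}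
    (hconv : ∀ t ∈ Icc (0 : ℝ) 1, h (γ t) ≤ (1 - t) * h (γ 0) + t * h (γ 1))
    (hne : γ 0 ≠ γ 1) {s : ℝ} (hs : s ∈ Ioc (0 : ℝ) 1) :
    (h (γ 0) - h (γ 1)) / dist (γ 0) (γ 1) ≤
      max (h (γ 0) - h (γ s)) 0 / dist (γ s) (γ 0) := by
  have hd : 0 < dist (γ 0) (γ 1) := dist_pos.mpr hne
  have hdecr : s * (h (γ 0) - h (γ 1)) ≤ h (γ 0) - h (γ s) := by
    linarith [hconv s (Ioc_subset_Icc_self hs)]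
  rw [hγ.dist_apply_zero (Ioc_subset_Icc_self hs), div_le_div_iff₀ hd (mul_pos hs.1 hd)]
  calc (h (γ 0) - h (γ 1)) * (s * dist (γ 0) (γ 1))
      = s * (h (γ 0) - h (γ 1)) * dist (γ 0) (γ 1) := by ring
    _ ≤ max (h (γ 0) - h (γ s)) 0 * dist (γ 0) (γ 1) :=
        mul_le_mul_of_nonneg_right (hdecr.trans (le_max_left _ _)) hd.le

lemma sub_le_dist_mul_descSlope (hγ : IsUnitGeodesic γ) {h : X → ℝ}
    (hconv : ∀ t ∈ Icc (0 : ℝ) 1, h (γ t) ≤ (1 - t) * h (γ 0) + t * h (γ 1))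
    (hbdd : IsBoundedUnder (· ≤ ·) (𝓝[≠] (γ 0))
      (fun z => max (h (γ 0) - h z) 0 / dist z (γ 0))) :
    h (γ 0) - h (γ 1) ≤ dist (γ 0) (γ 1) * descSlope h (γ 0) := by
  rcases eq_or_ne (γ 0) (γ 1) with heq | hne
  · simp [heq]
  have hd : 0 < dist (γ 0) (γ 1) := dist_pos.mpr hne
  have hfreq : ∃ᶠ s in 𝓝[>] (0 : ℝ), (h (γ 0) - h (γ 1)) / dist (γ 0) (γ 1) ≤
      max (h (γ 0) - h (γ s)) 0 / dist (γ s) (γ 0) :=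
    (eventually_of_mem (Ioc_mem_nhdsGT one_pos)
      fun s hs => hγ.chord_slope_le_descentQuotient hconv hne hs).frequently
  have hslope := le_limsup_of_frequently_le ((hγ.tendsto_nhdsNE hne).frequently hfreq) hbdd
  rw [div_le_iff₀ hd] at hslope
  unfold descSlope
  linarith

end IsUnitGeodesic

lemma sub_iInf_add_dist_sq_div_bounds {X : Type*} [PseudoMetricSpace X] {h : X → ℝ} {x : X}
    {S t : ℝ} (ht : 0 < t) (hS : ∀ y, h x - h y ≤ dist x y * S) :
    0 ≤ (h x - ⨅ y : X, h y + dist x y ^ 2 / t) / t ∧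
      (h x - ⨅ y : X, h y + dist x y ^ 2 / t) / t ≤ (1 / 4) * S ^ 2 := by
  have hlower : ∀ y, h x - t * S ^ 2 / 4 ≤ h y + dist x y ^ 2 / t := by
    intro y
    have hamgm : dist x y * S ≤ dist x y ^ 2 / t + t * S ^ 2 / 4 := by
      rw [div_add' _ _ _ ht.ne', le_div_iff₀ ht]
      nlinarith [sq_nonneg (dist x y - t * S / 2)]
    linarith [hS y]
  have hinf_le : (⨅ y : X, h y + dist x y ^ 2 / t) ≤ h x := by
    simpa using ciInf_le ⟨_, forall_mem_range.mpr hlower⟩ x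
  have : Nonempty X := ⟨x⟩
  have hinf_ge : h x - t * S ^ 2 / 4 ≤ ⨅ y : X, h y + dist x y ^ 2 / t := le_ciInf hlower
  refine ⟨div_nonneg (sub_nonneg.mpr hinf_le) ht.le, ?_⟩
  rw [div_le_iff₀ ht]
  linarith

/-- on a geodesic space, a (locally Lipschitz) geodesically convex
function `h` satisfies `h x - h y ≤ d(x,y) |∇⁻h|(x)`, and consequently
`0 ≤ (h x - Q_t h x)/t ≤ (1/4)|∇⁻h(x)|²` for every `t > 0`. -/
theorem convex_slope_infConv {X : Type*} [MetricSpace X]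
    (hgeo : ∀ x y : X, ∃ γ : ℝ → X, γ 0 = x ∧ γ 1 = y ∧ IsUnitGeodesic γ)
    (h : X → ℝ)
    (hconv : ∀ γ : ℝ → X, IsUnitGeodesic γ → ∀ t ∈ Icc (0:ℝ) 1,
      h (γ t) ≤ (1 - t) * h (γ 0) + t * h (γ 1))
    (hloclip : ∀ x : X, ∃ ε > (0:ℝ), ∃ K : NNReal,
      LipschitzOnWith K h (Metric.ball x ε)) :
    (∀ x y : X, h x - h y ≤ dist x y * descSlope h x) ∧
    (∀ t : ℝ, 0 < t → ∀ x : X,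
      0 ≤ (h x - ⨅ y : X, h y + dist x y ^ 2 / t) / t ∧
      (h x - ⨅ y : X, h y + dist x y ^ 2 / t) / t ≤ (1 / 4) * (descSlope h x) ^ 2) := by
  have hslope : ∀ x y : X, h x - h y ≤ dist x y * descSlope h x := by
    intro x y
    obtain ⟨γ, rfl, rfl, hγ⟩ := hgeo x y
    obtain ⟨ε, hε, K, hK⟩ := hloclip (γ 0)
    exact hγ.sub_le_dist_mul_descSlope (hconv γ hγ)
      (hK.isBoundedUnder_descentQuotient (Metric.ball_mem_nhds _ hε))
  exact ⟨hslope, fun t ht x => sub_iInf_add_dist_sq_div_bounds ht (hslope x)⟩
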